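/- Let X = [0,1] be endowed with the snowflake metric d(x,y) = √|x−y| and let Ω be any nonempty proper open subset of X. Then for every continuous function ℓ : Ω → ℝ with ℓ(x) > 0 for all x ∈ Ω, there is no continuous function u : cl(Ω) → ℝ such that s[u](x) = ℓ(x) for all x ∈ Ω (slope taken in the metric space ([0,1],d)) and u(x) = 0 for all x ∈ ∂Ω. In particular, no slope eikonal equation with zero boundary data admits a continuous pointwise solution in this space. -/

import Mathlib

open Filter Topology Set MeasureTheory
open scoped ENNReal NNReal

/-- The local (descent) slope of `u` at `x`, relative to the ambient set `A`. -/
noncomputable def locSlopeOn {X : Type*} [PseudoMetricSpace X] (u : X → ℝ) (A : Set X) (x : X) :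
    ℝ≥0∞ :=
  Filter.limsup (fun y => ENNReal.ofReal (max (u x - u y) 0 / dist x y)) (𝓝[A \ {x}] x)

/-- The local (descent) slope of `u` at `x`. -/
noncomputable def locSlope {X : Type*} [PseudoMetricSpace X] (u : X → ℝ) (x : X) : ℝ≥0∞ :=
  locSlopeOn u Set.univ x

/-- The intrinsic (length) distance between two points. -/
noncomputable def intrinsicDist {X : Type*} [PseudoMetricSpace X] (x y : X) : ℝ≥0∞ :=
  ⨅ (T : ℝ) (_ : 0 ≤ T) (γ : ℝ → X) (_ : ContinuousOn γ (Set.Icc 0 T))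
    (_ : γ 0 = x) (_ : γ T = y), eVariationOn γ (Set.Icc 0 T)

/-- Compatibility condition (CC). -/
def SatisfiesCC {X : Type*} [PseudoMetricSpace X] (Ω : Set X) (ℓ g : X → ℝ) : Prop :=
  ∀ x ∈ frontier Ω, ∀ y ∈ frontier Ω, ∀ T > (0:ℝ), ∀ γ : ℝ → X,
    LipschitzOnWith 1 γ (Set.Icc 0 T) → Set.MapsTo γ (Set.Icc 0 T) (closure Ω) →
    γ 0 = y → γ T = x → Set.MapsTo γ (Set.Ioo 0 T) Ω →
    g x - g y ≤ ∫ t in (0:ℝ)..T, ℓ (γ t)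

/-- Continuous pointwise solution of the slope eikonal equation. -/
def IsEikonalSol {X : Type*} [PseudoMetricSpace X] (Ω : Set X) (ℓ g u : X → ℝ) : Prop :=
  ContinuousOn u (closure Ω) ∧
  (∀ x ∈ Ω, locSlopeOn u (closure Ω) x = ENNReal.ofReal (ℓ x)) ∧
  ∀ x ∈ frontier Ω, u x = g x

/-- Eikonal space. -/
def IsEikonalSpace (X : Type*) [MetricSpace X] : Prop :=
  ∀ Ω : Set X, IsOpen Ω → Ω.Nonempty → Ω ≠ Set.univ →
    ∀ ℓ g : X → ℝ, ContinuousOn ℓ Ω → (∃ M, ∀ x ∈ Ω, |ℓ x| ≤ M) →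
      (∃ c > 0, ∀ x ∈ Ω, c ≤ ℓ x) → ContinuousOn g (frontier Ω) →
      SatisfiesCC Ω ℓ g → ∃ u : X → ℝ, IsEikonalSol Ω ℓ g u

/-- The `E_{1,0}` property. -/
def HasE10 (X : Type*) [MetricSpace X] : Prop :=
  ∀ K : Set X, IsClosed K → K.Nonempty →
    ∃ u : X → ℝ, Continuous u ∧ (∀ x ∉ K, locSlope u x = 1) ∧ ∀ x ∈ K, u x = 0

/-- The unit interval, to be endowed with the snowflake metric `d(x,y) = √|x-y|`. -/
structure Snow : Type where
  val : ℝ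
  mem : val ∈ Set.Icc (0:ℝ) 1

private theorem sqrt_subadd {a b : ℝ} (ha : 0 ≤ a) (hb : 0 ≤ b) :
    Real.sqrt (a + b) ≤ Real.sqrt a + Real.sqrt b := by
  have sa := Real.sq_sqrt ha
  have sb := Real.sq_sqrt hb
  have na := Real.sqrt_nonneg a
  have nb := Real.sqrt_nonneg b
  have h2 : a + b ≤ (Real.sqrt a + Real.sqrt b) ^ 2 := by nlinarith
  calc Real.sqrt (a + b) ≤ Real.sqrt ((Real.sqrt a + Real.sqrt b) ^ 2) :=
        Real.sqrt_le_sqrt h2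
    _ = Real.sqrt a + Real.sqrt b := Real.sqrt_sq (by positivity)

/-- The snowflake metric `d(x,y) = √|x - y|` on `[0,1]`. -/
noncomputable instance : MetricSpace Snow where
  dist x y := Real.sqrt |x.val - y.val|
  dist_self x := by simp
  dist_comm x y := by rw [abs_sub_comm]
  dist_triangle x y z := by
    calc Real.sqrt |x.val - z.val| ≤ Real.sqrt (|x.val - y.val| + |y.val - z.val|) :=
          Real.sqrt_le_sqrt (abs_sub_le _ _ _)
      _ ≤ Real.sqrt |x.val - y.val| + Real.sqrt |y.val - z.val| :=
          sqrt_subadd (abs_nonneg _) (abs_nonneg _)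
  eq_of_dist_eq_zero := by
    intro x y h
    have h0 : |x.val - y.val| = 0 := by
      have := Real.sqrt_eq_zero (abs_nonneg _) |>.mp h
      exact this
    cases x; cases y
    simp only [abs_eq_zero, sub_eq_zero] at h0
    simpa using h0

/-! Since `d(x, y) ^ 2 = |x - y|`, a point where `u` decreases at most linearly in the Euclidean
distance has zero slope for `d`. Such points always exist: minimize `u(y) + C |y - a|` over a
closed interval around `a`, with `C` so large that the minimum is not at an endpoint. Hence
`s[u] = ℓ > 0` fails somewhere in `Ω`. -/

section Descent

variable {X : Type*} [PseudoMetricSpace X] {f : X → ℝ}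

theorem IsCompact.exists_mem_forall_sub_le_mul_dist {K V : Set X} (hK : IsCompact K)
    (hf : ContinuousOn f K) {a : X} (ha : a ∈ K) {C : ℝ} (hC : 0 ≤ C)
    (hV : ∀ y ∈ K \ V, f a < f y + C * dist y a) :
    ∃ x ∈ K ∩ V, ∀ y ∈ K, f x - f y ≤ C * dist x y := by
  obtain ⟨x, hxK, hmin⟩ := hK.exists_isMinOn ⟨a, ha⟩
    (hf.add (continuous_const.mul (continuous_id.dist continuous_const)).continuousOn)
  refine ⟨x, ⟨hxK, ?_⟩, fun y hy => ?_⟩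
  · by_contra hxV
    have hxa : f x + C * dist x a ≤ f a + C * dist a a := hmin ha
    rw [dist_self, mul_zero] at hxa
    linarith [hV x ⟨hxK, hxV⟩]
  · have hxy : f x + C * dist x a ≤ f y + C * dist y a := hmin hy
    linarith [mul_le_mul_of_nonneg_left (dist_triangle_left y a x) hC]

theorem IsOpen.exists_eventually_sub_le_mul_dist [ProperSpace X] {U : Set X} (hU : IsOpen U)
    (hne : U.Nonempty) (hf : ContinuousOn f U) :
    ∃ x ∈ U, ∃ C, 0 ≤ C ∧ ∀ᶠ y in 𝓝 x, f x - f y ≤ C * dist x y := by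
  obtain ⟨a, ha⟩ := hne
  obtain ⟨r, hr, hball⟩ := Metric.nhds_basis_closedBall.mem_iff.1 (hU.mem_nhds ha)
  have hK := isCompact_closedBall a r
  have haK := Metric.mem_closedBall_self (x := a) hr.le
  have hfK := hf.mono hball
  obtain ⟨M, hM⟩ := hK.exists_bound_of_continuousOn hfK
  have hM₀ : 0 ≤ M := (norm_nonneg _).trans (hM a haK)
  -- `C r` exceeds the oscillation `2 M` of `f`, so the minimum is not attained on the sphere.
  have hC : 0 ≤ (2 * M + 1) / r := by positivity
  obtain ⟨x, ⟨-, hx⟩, hdescent⟩ := hK.exists_mem_forall_sub_le_mul_dist hfK haK hC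
    (V := Metric.ball a r) fun y ⟨hyK, hyV⟩ => by
      have hya : dist y a = r := le_antisymm hyK (not_lt.1 hyV)
      rw [hya, div_mul_cancel₀ _ hr.ne']
      linarith [abs_le.1 (hM a haK), abs_le.1 (hM y hyK)]
  refine ⟨x, hball (Metric.ball_subset_closedBall hx), _, hC, ?_⟩
  filter_upwards [mem_of_superset (Metric.isOpen_ball.mem_nhds hx) Metric.ball_subset_closedBall]
    using hdescent

theorem locSlopeOn_eq_zero_of_eventually_sub_le_mul_dist_sq {u : X → ℝ} {A : Set X} {x : X}
    {C : ℝ} (hC : 0 ≤ C) (h : ∀ᶠ y in 𝓝[A \ {x}] x, u x - u y ≤ C * dist x y ^ 2) :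
    locSlopeOn u A x = 0 := by
  rcases (𝓝[A \ {x}] x).eq_or_neBot with hbot | hne
  · simp [locSlopeOn, hbot]
  have hlim : Tendsto (fun y => ENNReal.ofReal (C * dist x y)) (𝓝[A \ {x}] x) (𝓝 0) := by
    have : Tendsto (fun y => C * dist x y) (𝓝 x) (𝓝 (C * dist x x)) :=
      (continuous_const.mul (continuous_const.dist continuous_id)).tendsto x
    simpa using (ENNReal.tendsto_ofReal this).mono_left nhdsWithin_le_nhds
  refine Tendsto.limsup_eq (tendsto_of_tendsto_of_tendsto_of_le_of_le' tendsto_const_nhds hlim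
    (Eventually.of_forall fun _ => bot_le) ?_)
  filter_upwards [h] with y hy
  refine ENNReal.ofReal_le_ofReal (div_le_of_le_mul₀ dist_nonneg (by positivity) ?_)
  calc max (u x - u y) 0 ≤ C * dist x y ^ 2 := max_le hy (by positivity)
    _ = C * dist x y * dist x y := by ring

end Descent

namespace Snow

theorem dist_sq (x y : Snow) : dist x y ^ 2 = |x.val - y.val| :=
  Real.sq_sqrt (abs_nonneg _)

theorem continuous_val : Continuous Snow.val := by
  refine continuous_iff_continuousAt.2 fun x => tendsto_iff_dist_tendsto_zero.2 ?_
  have : Tendsto (fun y => dist y x ^ 2) (𝓝 x) (𝓝 (dist x x ^ 2)) :=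
    ((continuous_id.dist continuous_const).pow 2).tendsto x
  simpa [Real.dist_eq, dist_sq] using this

noncomputable def ofReal (t : ℝ) : Snow :=
  ⟨projIcc 0 1 zero_le_one t, (projIcc 0 1 zero_le_one t).2⟩

theorem val_ofReal {t : ℝ} (ht : t ∈ Icc (0 : ℝ) 1) : (ofReal t).val = t := by
  simp [ofReal, projIcc_of_mem _ ht]

theorem ofReal_val (x : Snow) : ofReal x.val = x := by
  cases x with
  | mk t ht => simp [ofReal, projIcc_of_mem _ ht]

theorem continuous_ofReal : Continuous ofReal := by
  refine continuous_iff_continuousAt.2 fun t => tendsto_iff_dist_tendsto_zero.2 ?_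
  have : Continuous fun s : ℝ =>
      Real.sqrt |(projIcc 0 1 zero_le_one s : ℝ) - projIcc 0 1 zero_le_one t| := by
    fun_prop
  have h := this.tendsto t
  simp only [sub_self, abs_zero, Real.sqrt_zero] at h
  exact h

end Snow

theorem stmt5_general (Ω : Set Snow) (hΩ : IsOpen Ω) (hne : Ω.Nonempty)
    (ℓ : Snow → ℝ) (hpos : ∀ x ∈ Ω, 0 < ℓ x) :
    ¬ ∃ u : Snow → ℝ, ContinuousOn u (closure Ω) ∧
        (∀ x ∈ Ω, locSlopeOn u (closure Ω) x = ENNReal.ofReal (ℓ x)) ∧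
        ∀ x ∈ frontier Ω, u x = 0 := by
  rintro ⟨u, hu, hslope, -⟩
  have hU : IsOpen (Snow.ofReal ⁻¹' Ω ∩ Ioo 0 1) :=
    (hΩ.preimage Snow.continuous_ofReal).inter isOpen_Ioo
  have hUne : (Snow.ofReal ⁻¹' Ω ∩ Ioo 0 1).Nonempty := by
    obtain ⟨x₀, hx₀⟩ := hne
    have : x₀.val ∈ closure (Ioo (0 : ℝ) 1) := by rw [closure_Ioo zero_ne_one]; exact x₀.mem
    exact mem_closure_iff.1 this _ (hΩ.preimage Snow.continuous_ofReal)
      (by rwa [mem_preimage, Snow.ofReal_val])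
  obtain ⟨t, ⟨htΩ, ht⟩, C, hC, hdescent⟩ := hU.exists_eventually_sub_le_mul_dist hUne
    (hu.comp Snow.continuous_ofReal.continuousOn fun s hs => subset_closure hs.1)
  set x := Snow.ofReal t
  have hxt : x.val = t := Snow.val_ofReal (Ioo_subset_Icc_self ht)
  have hx : ∀ᶠ y in 𝓝 x, u x - u y ≤ C * dist x y ^ 2 := by
    filter_upwards [Snow.continuous_val.continuousAt.eventually (hxt ▸ hdescent)] with y hy
    simpa [x, Snow.ofReal_val, Snow.dist_sq, hxt, Real.dist_eq] using hy
  have hℓ := hslope x htΩ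
  rw [locSlopeOn_eq_zero_of_eventually_sub_le_mul_dist_sq hC
    (hx.filter_mono nhdsWithin_le_nhds)] at hℓ
  exact (ENNReal.ofReal_pos.2 (hpos x htΩ)).ne hℓ

/-- On the snowflaked interval, no slope eikonal equation with positive
continuous right-hand side and zero boundary data admits a continuous pointwise solution. -/
theorem stmt5 (Ω : Set Snow) (hΩ : IsOpen Ω) (hne : Ω.Nonempty) (hproper : Ω ≠ Set.univ)
    (ℓ : Snow → ℝ) (hℓ : ContinuousOn ℓ Ω) (hpos : ∀ x ∈ Ω, 0 < ℓ x) :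
    ¬ ∃ u : Snow → ℝ, ContinuousOn u (closure Ω) ∧
        (∀ x ∈ Ω, locSlopeOn u (closure Ω) x = ENNReal.ofReal (ℓ x)) ∧
        ∀ x ∈ frontier Ω, u x = 0 :=
  stmt5_general Ω hΩ hne ℓ hpos
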